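/- Let Z ∈ H₃. Then Z is invertible, the matrix −Z⁻¹ again lies in H₃, and for all s₁, s₂, s₃ ∈ ℂ one has P(s₁, s₂, s₃; −Z⁻¹) = e^{(s₁+2s₂+3s₃)πi} · P(s₂, s₁, −s₁−s₂−s₃; WZW), where W = ((0,0,1),(0,1,0),(1,0,0)) is the 3×3 antidiagonal permutation matrix (so WZW reverses the order of rows and columns of Z). -/

import Mathlib

/-!
Write `t₁, t₂, t₃` for the diagonal entries of `Z`, `d₂` and `e₂` for its upper-left and
lower-right `2 × 2` principal minors and `d = det Z`. By the cofactor formula, every base of a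
power on either side is, up to sign, a quotient of products of `t₁, t₃, d₂, e₂, d`. Since
`-Z⁻¹ ∈ H_n` whenever `Z ∈ H_n`, applying this to `Z` and to its two `2 × 2` principal blocks
puts `tᵢ`, `d₂/t₁`, `d₂/t₂`, `e₂/t₂`, `e₂/t₃`, `d/d₂`, `d/e₂` in the upper half-plane. For `a, b`
there the principal logarithm obeys `log (-(a b)) = log a + log b - π i` exactly, so the
logarithm of every base is an explicit combination of the logarithms of these quotients. The
one relation among them, `log t₁ + log (d₂/t₁) + log (d/d₂) = log t₃ + log (e₂/t₃) + log (d/e₂)`,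
is proved by passing through `t₂`, two factors at a time; after that, comparing exponents is
linear algebra.
-/

/-- The power function on the Siegel upper half-space of degree 3:
`P(s,w,u;Z) = τ₁^s · e^{wπi}(−det Z₂)^w · e^{2uπi}((det Z)/(z₃²−τ₂τ₃))^u (z₃²−τ₂τ₃)^u`,
with all powers principal-branch powers. -/
noncomputable def siegelPower (s w u : ℂ) (Z : Matrix (Fin 3) (Fin 3) ℂ) : ℂ :=
  (Z 0 0) ^ s *
    (Complex.exp (w * (Real.pi : ℂ) * Complex.I) *
      (-(Z 0 0 * Z 1 1 - Z 0 1 ^ 2)) ^ w) *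
    (Complex.exp (2 * u * (Real.pi : ℂ) * Complex.I) *
      (Z.det / (Z 1 2 ^ 2 - Z 1 1 * Z 2 2)) ^ u * (Z 1 2 ^ 2 - Z 1 1 * Z 2 2) ^ u)

/-- The 3×3 antidiagonal permutation matrix `W`. -/
def antidiagW : Matrix (Fin 3) (Fin 3) ℂ := !![0, 0, 1; 0, 1, 0; 1, 0, 0]

open Complex Matrix
open scoped Real

namespace Complex

variable {a b c e : ℂ}

lemma arg_mem_Ioo_of_im_pos (ha : 0 < a.im) : a.arg ∈ Set.Ioo 0 π := by
  refine ⟨(arg_nonneg_iff.mpr ha.le).lt_of_ne fun h ↦ ?_, arg_lt_pi_iff.mpr (.inr ha.ne')⟩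
  exact ha.ne' (arg_eq_zero_iff.mp h.symm).2

lemma ne_zero_of_im_pos (ha : 0 < a.im) : a ≠ 0 :=
  UpperHalfPlane.ne_zero ⟨a, ha⟩

lemma im_neg_inv_pos (ha : 0 < a.im) : 0 < (-a⁻¹).im := by
  rw [neg_inv]
  exact UpperHalfPlane.im_inv_neg_coe_pos ⟨a, ha⟩

lemma log_neg_of_im_pos (ha : 0 < a.im) : log (-a) = log a - π * I := by
  obtain ⟨h₀, hπ⟩ := arg_mem_Ioo_of_im_pos ha
  have hexp : -a = exp (log a - π * I) := by
    rw [exp_sub, exp_log (ne_zero_of_im_pos ha), exp_pi_mul_I, div_neg, div_one]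
  have him : (log a - π * I).im = a.arg - π := by simp [log_im]
  rw [hexp, log_exp] <;> linarith

lemma log_neg_inv_of_im_pos (ha : 0 < a.im) : log (-a⁻¹) = π * I - log a := by
  obtain ⟨h₀, hπ⟩ := arg_mem_Ioo_of_im_pos ha
  have hexp : -a⁻¹ = exp (π * I - log a) := by
    rw [exp_sub, exp_log (ne_zero_of_im_pos ha), exp_pi_mul_I, neg_div, one_div]
  have him : (π * I - log a).im = π - a.arg := by simp [log_im]
  rw [hexp, log_exp] <;> linarith

lemma log_neg_mul_of_im_pos (ha : 0 < a.im) (hb : 0 < b.im) :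
    log (-(a * b)) = log a + log b - π * I := by
  obtain ⟨ha₀, haπ⟩ := arg_mem_Ioo_of_im_pos ha
  obtain ⟨hb₀, hbπ⟩ := arg_mem_Ioo_of_im_pos hb
  have hexp : -(a * b) = exp (log a + log b - π * I) := by
    rw [exp_sub, exp_add, exp_log (ne_zero_of_im_pos ha), exp_log (ne_zero_of_im_pos hb),
      exp_pi_mul_I, div_neg, div_one]
  have him : (log a + log b - π * I).im = a.arg + b.arg - π := by simp [log_im]
  rw [hexp, log_exp] <;> linarith

lemma log_neg_mul_inv_of_im_pos (ha : 0 < a.im) (hb : 0 < b.im) :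
    log (-(a * b)⁻¹) = π * I - log a - log b := by
  have : -(a * b)⁻¹ = -((-a⁻¹) * (-b⁻¹)) := by rw [mul_inv]; ring
  rw [this, log_neg_mul_of_im_pos (im_neg_inv_pos ha) (im_neg_inv_pos hb),
    log_neg_inv_of_im_pos ha, log_neg_inv_of_im_pos hb]
  ring

lemma log_add_log_eq_of_mul_eq (ha : 0 < a.im) (hb : 0 < b.im) (hc : 0 < c.im)
    (he : 0 < e.im) (h : a * b = c * e) : log a + log b = log c + log e := by
  have := log_neg_mul_of_im_pos ha hb
  rw [h, log_neg_mul_of_im_pos hc he] at this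
  linear_combination -this

end Complex

namespace Matrix

variable {n : Type*} [Fintype n] {Z : Matrix n n ℂ}

def siegelUpperHalfSpace (n : Type*) [Fintype n] : Set (Matrix n n ℂ) :=
  {Z | Z.IsSymm ∧ (Z.map im).PosDef}

lemma im_star_dotProduct_mulVec_eq_of_isSymm (hZ : Z.IsSymm) (u : n → ℂ) :
    (star u ⬝ᵥ (Z *ᵥ u)).im =
      (fun i ↦ (u i).re) ⬝ᵥ (Z.map im *ᵥ fun i ↦ (u i).re) +
        (fun i ↦ (u i).im) ⬝ᵥ (Z.map im *ᵥ fun i ↦ (u i).im) := by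
  have hskew : ∑ i, ∑ j, (Z i j).re * ((u i).re * (u j).im - (u i).im * (u j).re) = 0 := by
    simp only [mul_sub, Finset.sum_sub_distrib, sub_eq_zero]
    rw [Finset.sum_comm]
    refine Finset.sum_congr rfl fun i _ ↦ Finset.sum_congr rfl fun j _ ↦ ?_
    rw [hZ.apply i j]
    ring
  simp only [dotProduct, mulVec, im_sum, Finset.mul_sum, ← Finset.sum_add_distrib]
  rw [← sub_eq_zero, ← Finset.sum_sub_distrib, ← hskew]
  refine Finset.sum_congr rfl fun i _ ↦ ?_
  rw [← Finset.sum_sub_distrib]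
  refine Finset.sum_congr rfl fun j _ ↦ ?_
  simp only [Pi.star_apply, map_apply, mul_im, mul_re, star_def, conj_re, conj_im]
  ring

lemma im_star_dotProduct_mulVec_pos (hZ : Z ∈ siegelUpperHalfSpace n) {u : n → ℂ}
    (hu : u ≠ 0) : 0 < (star u ⬝ᵥ (Z *ᵥ u)).im := by
  obtain ⟨hsymm, hY⟩ := hZ
  have hpos : ∀ x : n → ℝ, x ≠ 0 → 0 < x ⬝ᵥ (Z.map im *ᵥ x) := fun x hx ↦ by
    simpa using hY.dotProduct_mulVec_pos hx
  have hnonneg : ∀ x : n → ℝ, 0 ≤ x ⬝ᵥ (Z.map im *ᵥ x) := fun x ↦ by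
    simpa using hY.posSemidef.dotProduct_mulVec_nonneg x
  rw [im_star_dotProduct_mulVec_eq_of_isSymm hsymm]
  by_cases hre : (fun i ↦ (u i).re) = 0
  · have him : (fun i ↦ (u i).im) ≠ 0 := fun him ↦
      hu (funext fun i ↦ Complex.ext (congrFun hre i) (congrFun him i))
    linarith [hnonneg fun i ↦ (u i).re, hpos _ him]
  · linarith [hpos _ hre, hnonneg fun i ↦ (u i).im]

lemma im_diag_pos_of_mem_siegelUpperHalfSpace (hZ : Z ∈ siegelUpperHalfSpace n) (i : n) :
    0 < (Z i i).im :=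
  hZ.2.diag_pos

lemma submatrix_mem_siegelUpperHalfSpace {m : Type*} [Fintype m]
    (hZ : Z ∈ siegelUpperHalfSpace n) {f : m → n} (hf : Function.Injective f) :
    Z.submatrix f f ∈ siegelUpperHalfSpace m :=
  ⟨hZ.1.submatrix f, hZ.2.submatrix hf⟩

lemma im_dotProduct_mulVec_ofReal (A : Matrix n n ℂ) (x : n → ℝ) :
    ((fun i ↦ (x i : ℂ)) ⬝ᵥ (A *ᵥ fun i ↦ (x i : ℂ))).im = x ⬝ᵥ (A.map im *ᵥ x) := by
  simp [dotProduct, mulVec, im_sum, Finset.mul_sum]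

variable [DecidableEq n]

lemma det_ne_zero_of_mem_siegelUpperHalfSpace (hZ : Z ∈ siegelUpperHalfSpace n) :
    Z.det ≠ 0 := by
  intro h
  obtain ⟨v, hv, hZv⟩ := exists_mulVec_eq_zero_iff.mpr h
  simpa [hZv] using im_star_dotProduct_mulVec_pos hZ hv

/-- For real `x = Z v` one has `xᵀ Z⁻¹ x = conj (vᴴ Z v)`, whose imaginary part is negative. -/
lemma neg_inv_mem_siegelUpperHalfSpace (hZ : Z ∈ siegelUpperHalfSpace n) :
    -Z⁻¹ ∈ siegelUpperHalfSpace n := by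
  have hsymm : (-Z⁻¹).IsSymm := by
    rw [IsSymm, transpose_neg, transpose_nonsing_inv, hZ.1]
  have hdet : IsUnit Z.det := (det_ne_zero_of_mem_siegelUpperHalfSpace hZ).isUnit
  refine ⟨hsymm, .of_dotProduct_mulVec_pos ?_ fun x hx ↦ ?_⟩
  · ext i j
    simp [hsymm.apply i j]
  set x' : n → ℂ := fun i ↦ (x i : ℂ)
  have hx' : x' ≠ 0 := fun h ↦ hx (funext fun i ↦ by simpa [x'] using congrFun h i)
  set v := Z⁻¹ *ᵥ x'
  have hZv : Z *ᵥ v = x' := by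
    rw [mulVec_mulVec, mul_nonsing_inv _ hdet, one_mulVec]
  have hv : v ≠ 0 := by
    rintro h
    rw [h, mulVec_zero] at hZv
    exact hx' hZv.symm
  have hx'_real : star x' = x' := funext fun i ↦ by simp [x']
  have hconj : x' ⬝ᵥ v = star (star v ⬝ᵥ (Z *ᵥ v)) := by
    rw [← star_dotProduct, hZv, hx'_real]
  rw [star_trivial, ← im_dotProduct_mulVec_ofReal, neg_mulVec, dotProduct_neg, hconj]
  simpa using im_star_dotProduct_mulVec_pos hZ hv

/-- `Z.det / Z.adjugate i i = -((-Z⁻¹) i i)⁻¹`, and `w ↦ -w⁻¹` preserves the upper half-plane. -/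
lemma im_det_div_adjugate_pos (hZ : Z ∈ siegelUpperHalfSpace n) (i : n) :
    0 < (Z.det / Z.adjugate i i).im := by
  have hpos := im_diag_pos_of_mem_siegelUpperHalfSpace (neg_inv_mem_siegelUpperHalfSpace hZ) i
  rw [Matrix.inv_def, Ring.inverse_eq_inv', neg_apply, Matrix.smul_apply, smul_eq_mul,
    inv_mul_eq_div] at hpos
  simpa using im_neg_inv_pos hpos

end Matrix

lemma functional_equation_of_minors {t₁ t₂ t₃ d₂ e₂ d : ℂ}
    (h₁ : 0 < t₁.im) (h₂ : 0 < t₂.im) (h₃ : 0 < t₃.im)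
    (hd₂t₁ : 0 < (d₂ / t₁).im) (hd₂t₂ : 0 < (d₂ / t₂).im)
    (he₂t₂ : 0 < (e₂ / t₂).im) (he₂t₃ : 0 < (e₂ / t₃).im)
    (hdd₂ : 0 < (d / d₂).im) (hde₂ : 0 < (d / e₂).im) (s₁ s₂ s₃ : ℂ) :
    (-(e₂ / d)) ^ s₁ * (exp (s₂ * π * I) * (-(t₃ / d)) ^ s₂) *
        (exp (2 * s₃ * π * I) * t₁⁻¹ ^ s₃ * (-(t₁ / d)) ^ s₃) =
      exp ((s₁ + 2 * s₂ + 3 * s₃) * π * I) *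
        (t₃ ^ s₂ * (exp (s₁ * π * I) * (-e₂) ^ s₁) *
          (exp (2 * (-s₁ - s₂ - s₃) * π * I) * (-(d / d₂)) ^ (-s₁ - s₂ - s₃) *
            (-d₂) ^ (-s₁ - s₂ - s₃))) := by
  have ht₁ := ne_zero_of_im_pos h₁
  have ht₂ := ne_zero_of_im_pos h₂
  have ht₃ := ne_zero_of_im_pos h₃
  have hd₂ : d₂ ≠ 0 := (div_ne_zero_iff.mp (ne_zero_of_im_pos hd₂t₁)).1
  have he₂ : e₂ ≠ 0 := (div_ne_zero_iff.mp (ne_zero_of_im_pos he₂t₃)).1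
  have hd : d ≠ 0 := (div_ne_zero_iff.mp (ne_zero_of_im_pos hdd₂)).1
  have hlog_d :
      log t₁ + log (d₂ / t₁) + log (d / d₂) = log t₃ + log (e₂ / t₃) + log (d / e₂) := by
    have h₁₂ := log_add_log_eq_of_mul_eq h₁ hd₂t₁ h₂ hd₂t₂ (by field_simp)
    have h₃₂ := log_add_log_eq_of_mul_eq h₃ he₂t₃ h₂ he₂t₂ (by field_simp)
    have h₂₂ := log_add_log_eq_of_mul_eq hd₂t₂ hdd₂ he₂t₂ hde₂ (by field_simp)
    linear_combination h₁₂ - h₃₂ + h₂₂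
  have hlog₁ : log (-(e₂ / d)) = π * I - log (d / e₂) := by
    rw [← inv_div, log_neg_inv_of_im_pos hde₂]
  have hlog₂ : log (-(t₃ / d)) = π * I - log (e₂ / t₃) - log (d / e₂) := by
    rw [← log_neg_mul_inv_of_im_pos he₂t₃ hde₂]
    congr 2
    field_simp
  have hlog₃ : log t₁⁻¹ = -log t₁ := log_inv t₁ (arg_mem_Ioo_of_im_pos h₁).2.ne
  have hlog₄ : log (-(t₁ / d)) = π * I - log (d₂ / t₁) - log (d / d₂) := by
    rw [← log_neg_mul_inv_of_im_pos hd₂t₁ hdd₂]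
    congr 2
    field_simp
  have hlog₅ : log (-e₂) = log t₃ + log (e₂ / t₃) - π * I := by
    rw [← log_neg_mul_of_im_pos h₃ he₂t₃]
    congr 2
    field_simp
  have hlog₆ : log (-(d / d₂)) = log (d / d₂) - π * I := log_neg_of_im_pos hdd₂
  have hlog₇ : log (-d₂) = log t₁ + log (d₂ / t₁) - π * I := by
    rw [← log_neg_mul_of_im_pos h₁ hd₂t₁]
    congr 2
    field_simp
  simp (disch := simp [*]) only [cpow_def_of_ne_zero]
  simp only [← exp_add]
  congr 1
  rw [hlog₁, hlog₂, hlog₃, hlog₄, hlog₅, hlog₆, hlog₇]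
  linear_combination (s₁ + s₂) * hlog_d

lemma siegelPower_neg_inv {Z : Matrix (Fin 3) (Fin 3) ℂ} (hZ : Z.IsSymm) (hd : Z.det ≠ 0)
    (s w u : ℂ) :
    siegelPower s w u (-Z⁻¹) =
      (-((Z 1 1 * Z 2 2 - Z 1 2 ^ 2) / Z.det)) ^ s *
        (exp (w * π * I) * (-(Z 2 2 / Z.det)) ^ w) *
        (exp (2 * u * π * I) * (Z 0 0)⁻¹ ^ u * (-(Z 0 0 / Z.det)) ^ u) := by
  have hentry : ∀ i j, (-Z⁻¹) i j = -(Z.adjugate i j / Z.det) := fun i j ↦ by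
    rw [Matrix.inv_def, Ring.inverse_eq_inv', neg_apply, Matrix.smul_apply, smul_eq_mul,
      inv_mul_eq_div]
  have hdet : (-Z⁻¹).det = -Z.det⁻¹ := by
    rw [det_neg, det_nonsing_inv, Ring.inverse_eq_inv']
    norm_num
  have hexp := det_fin_three Z
  rw [hZ.apply 0 1, hZ.apply 0 2, hZ.apply 1 2] at hexp
  have h00 : (-Z⁻¹) 0 0 = -((Z 1 1 * Z 2 2 - Z 1 2 ^ 2) / Z.det) := by
    simp only [Fin.isValue, hentry, adjugate_fin_three, hZ.apply 1 2, of_apply, cons_val',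
      cons_val_zero, cons_val_fin_one, neg_inj]
    ring
  have hminor₁ : -((-Z⁻¹) 0 0 * (-Z⁻¹) 1 1 - (-Z⁻¹) 0 1 ^ 2) = -(Z 2 2 / Z.det) := by
    simp only [Fin.isValue, hentry, adjugate_fin_three, hZ.apply 0 1, hZ.apply 0 2, hZ.apply 1 2,
      of_apply, cons_val', cons_val_zero, cons_val_one, cons_val_fin_one]
    field_simp
    rw [hexp]
    ring
  have hminor₂ : (-Z⁻¹) 1 2 ^ 2 - (-Z⁻¹) 1 1 * (-Z⁻¹) 2 2 = -(Z 0 0 / Z.det) := by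
    simp only [Fin.isValue, hentry, adjugate_fin_three, hZ.apply 0 1, hZ.apply 0 2, hZ.apply 1 2,
      of_apply, cons_val', cons_val, cons_val_zero, cons_val_one, cons_val_fin_one]
    field_simp
    rw [hexp]
    ring
  have hquot : (-Z⁻¹).det / ((-Z⁻¹) 1 2 ^ 2 - (-Z⁻¹) 1 1 * (-Z⁻¹) 2 2) = (Z 0 0)⁻¹ := by
    rw [hdet, hminor₂, neg_div_neg_eq, div_div_eq_mul_div, inv_mul_cancel₀ hd, one_div]
  rw [siegelPower, hminor₁, hquot, hminor₂, h00]

lemma antidiagW_mul_mul_antidiagW (Z : Matrix (Fin 3) (Fin 3) ℂ) :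
    antidiagW * Z * antidiagW = Z.submatrix Fin.rev Fin.rev := by
  ext i j
  fin_cases i <;> fin_cases j <;>
    simp [antidiagW, Matrix.mul_apply, Fin.sum_univ_three, vecMul, dotProduct]

lemma siegelPower_antidiagW_conj {Z : Matrix (Fin 3) (Fin 3) ℂ} (hZ : Z.IsSymm) (s w u : ℂ) :
    siegelPower s w u (antidiagW * Z * antidiagW) =
      Z 2 2 ^ s * (exp (w * π * I) * (-(Z 1 1 * Z 2 2 - Z 1 2 ^ 2)) ^ w) *
        (exp (2 * u * π * I) * (-(Z.det / (Z 0 0 * Z 1 1 - Z 0 1 ^ 2))) ^ u *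
          (-(Z 0 0 * Z 1 1 - Z 0 1 ^ 2)) ^ u) := by
  have hdet : (Z.submatrix Fin.rev Fin.rev).det = Z.det := det_submatrix_equiv_self Fin.revPerm Z
  have hminor₁ : Z 2 2 * Z 1 1 - Z 2 1 ^ 2 = Z 1 1 * Z 2 2 - Z 1 2 ^ 2 := by
    rw [hZ.apply 1 2]; ring
  have hminor₂ : Z 1 0 ^ 2 - Z 1 1 * Z 0 0 = -(Z 0 0 * Z 1 1 - Z 0 1 ^ 2) := by
    rw [hZ.apply 0 1]; ring
  rw [siegelPower, antidiagW_mul_mul_antidiagW, hdet]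
  simp only [submatrix_apply, show Fin.rev (0 : Fin 3) = 2 from rfl,
    show Fin.rev (1 : Fin 3) = 1 from rfl, show Fin.rev (2 : Fin 3) = 0 from rfl]
  rw [hminor₁, hminor₂, div_neg]

/-- For `Z ∈ H₃`, `Z` is invertible, `−Z⁻¹ ∈ H₃`, and for all
`s₁, s₂, s₃ ∈ ℂ`:
`P(s₁,s₂,s₃; −Z⁻¹) = e^{(s₁+2s₂+3s₃)πi} · P(s₂,s₁,−s₁−s₂−s₃; WZW)`. -/
theorem stmt_10 (Z : Matrix (Fin 3) (Fin 3) ℂ) (hsym : Z.IsSymm)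
    (hpd : (Z.map Complex.im).PosDef) :
    IsUnit Z.det ∧ (-Z⁻¹).IsSymm ∧ ((-Z⁻¹).map Complex.im).PosDef ∧
    ∀ s₁ s₂ s₃ : ℂ,
      siegelPower s₁ s₂ s₃ (-Z⁻¹) =
        Complex.exp ((s₁ + 2 * s₂ + 3 * s₃) * (Real.pi : ℂ) * Complex.I) *
          siegelPower s₂ s₁ (-s₁ - s₂ - s₃) (antidiagW * Z * antidiagW) := by
  have hZ : Z ∈ siegelUpperHalfSpace (Fin 3) := ⟨hsym, hpd⟩
  have hd := det_ne_zero_of_mem_siegelUpperHalfSpace hZ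
  obtain ⟨hsymm_inv, hpos_inv⟩ := neg_inv_mem_siegelUpperHalfSpace hZ
  refine ⟨hd.isUnit, hsymm_inv, hpos_inv, fun s₁ s₂ s₃ ↦ ?_⟩
  have hupper := submatrix_mem_siegelUpperHalfSpace hZ (Fin.castSucc_injective 2)
  have hlower := submatrix_mem_siegelUpperHalfSpace hZ (Fin.succ_injective 2)
  have ht i := im_diag_pos_of_mem_siegelUpperHalfSpace hZ i
  rw [siegelPower_neg_inv hsym hd, siegelPower_antidiagW_conj hsym]
  refine functional_equation_of_minors (ht 0) (ht 1) (ht 2) ?_ ?_ ?_ ?_ ?_ ?_ s₁ s₂ s₃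
  · simpa [det_fin_two, adjugate_fin_two, hsym.apply 0 1, sq] using
      im_det_div_adjugate_pos hupper 1
  · simpa [det_fin_two, adjugate_fin_two, hsym.apply 0 1, sq] using
      im_det_div_adjugate_pos hupper 0
  · simpa [det_fin_two, adjugate_fin_two, hsym.apply 1 2, sq] using
      im_det_div_adjugate_pos hlower 1
  · simpa [det_fin_two, adjugate_fin_two, hsym.apply 1 2, sq] using
      im_det_div_adjugate_pos hlower 0
  · simpa [adjugate_fin_three, hsym.apply 0 1, sq] using im_det_div_adjugate_pos hZ 2
  · simpa [adjugate_fin_three, hsym.apply 1 2, sq] using im_det_div_adjugate_pos hZ 0
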